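/- arXiv:2604.15458 — 2 statements merged into one kernel-verified Lean document; each statement's English description precedes it below -/
import Mathlib

section
/- Let d ≥ 2 and 1 ≤ k ≤ d−1 be integers. For every Schwartz function f : EuclideanSpace ℝ d → ℂ, every k-dimensional linear subspace α of EuclideanSpace ℝ d, and every η ∈ αᗮ, the fiberwise Fourier transform of Pf(α,·) at η satisfies \widehat{Pf}(α,η) = (2π)^{k/2} · f̂(η), where on the right-hand side η is regarded as an element of EuclideanSpace ℝ d via the inclusion αᗮ ↪ EuclideanSpace ℝ d. -/
open MeasureTheory ENNReal

noncomputable section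

/-- `ℝ^d` as a Euclidean space. -/
abbrev Ed (d : ℕ) := EuclideanSpace ℝ (Fin d)

/-- The unitary Fourier transform `ĝ(ξ) = (2π)^{-n/2} ∫ e^{-i⟨v,ξ⟫} g(v) dv` on a
finite-dimensional real inner product space `V` of dimension `n`, with respect to the
Lebesgue (Haar) measure induced by the inner product. -/
def uFT {V : Type*} [NormedAddCommGroup V] [InnerProductSpace ℝ V]
    [FiniteDimensional ℝ V] [MeasureSpace V] (f : V → ℂ) (ξ : V) : ℂ :=
  (((2 * Real.pi) ^ (-(Module.finrank ℝ V : ℝ) / 2) : ℝ) : ℂ) *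
    ∫ v, Complex.exp (-(Complex.I * ((inner ℝ v ξ : ℝ) : ℂ))) * f v

/-- The inverse unitary Fourier transform `g^∨(x) = (2π)^{-n/2} ∫ e^{i⟨ξ,x⟩} g(ξ) dξ`. -/
def uFTinv {V : Type*} [NormedAddCommGroup V] [InnerProductSpace ℝ V]
    [FiniteDimensional ℝ V] [MeasureSpace V] (f : V → ℂ) (x : V) : ℂ :=
  (((2 * Real.pi) ^ (-(Module.finrank ℝ V : ℝ) / 2) : ℝ) : ℂ) *
    ∫ ξ, Complex.exp (Complex.I * ((inner ℝ ξ x : ℝ) : ℂ)) * f ξ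

/-- The `k`-plane transform `Pf(α, y) = ∫_{x ∈ α} f(x + y) dx`, where the integral over
the subspace `α` is with respect to the Lebesgue (Haar) measure induced by its
inner product. -/
def kplane {d : ℕ} (f : Ed d → ℂ) (α : Submodule ℝ (Ed d)) (y : Ed d) : ℂ :=
  ∫ x : α, f ((x : Ed d) + y)

instance matrixMeasurableSpace {d : ℕ} : MeasurableSpace (Matrix (Fin d) (Fin d) ℝ) := by
  unfold Matrix; infer_instance

/-- The action of `g ∈ O(d)` on linear subspaces of `ℝ^d`. -/
def gact {d : ℕ} (g : Matrix.orthogonalGroup (Fin d) ℝ) (α : Submodule ℝ (Ed d)) :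
    Submodule ℝ (Ed d) :=
  α.map (Matrix.toEuclideanLin (g : Matrix (Fin d) (Fin d) ℝ))

/-- The total surface measure `|S^{m-1}| = 2 π^{m/2} / Γ(m/2)` of the unit sphere in `ℝ^m`. -/
def sphereVol (m : ℕ) : ℝ := 2 * Real.pi ^ ((m : ℝ) / 2) / Real.Gamma ((m : ℝ) / 2)

/-- The `ℓ^r` norm of a sequence of elements of `[0,∞]`, for `1 ≤ r ≤ ∞`. -/
def lrNorm (r : ℝ≥0∞) (a : ℕ → ℝ≥0∞) : ℝ≥0∞ :=
  if r = ∞ then ⨆ j, a j else (∑' j, a j ^ r.toReal) ^ (1 / r.toReal)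

/-- The `L^q` norm of a `[0,∞]`-valued function, for `1 ≤ q ≤ ∞`. -/
def lqNorm {X : Type*} [MeasurableSpace X] (μ : Measure X) (q : ℝ≥0∞) (F : X → ℝ≥0∞) :
    ℝ≥0∞ :=
  if q = ∞ then essSup F μ else (∫⁻ x, F x ^ q.toReal ∂μ) ^ (1 / q.toReal)

/-- The dyadic pieces: `φ₀ = φ` and `φ_j(ξ) = φ(2^{-j} ξ) - φ(2^{-j+1} ξ)` for `j ≥ 1`. -/
def phiseq {d : ℕ} (φ : Ed d → ℝ) : ℕ → Ed d → ℝ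
  | 0 => φ
  | (j + 1) => fun ξ =>
      φ (((2 : ℝ) ^ (-(j + 1 : ℤ))) • ξ) - φ (((2 : ℝ) ^ (-(j : ℤ))) • ξ)

/-- The Littlewood–Paley projection `M_j f = (φ_j · f̂)^∨`. -/
def LP {d : ℕ} (φ : Ed d → ℝ) (j : ℕ) (f : Ed d → ℂ) : Ed d → ℂ :=
  uFTinv (fun ξ => (phiseq φ j ξ : ℂ) * uFT f ξ)

open Module in
set_option maxHeartbeats 1600000 in
theorem mp_orthoSum {d : ℕ} (α : Submodule ℝ (Ed d)) :
    MeasurePreserving (fun p : αᗮ × α => ((p.1 : Ed d) + (p.2 : Ed d)))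
      (volume.prod volume) volume := by
  classical
  have hc : IsCompl (αᗮ) α := (Submodule.isCompl_orthogonal_of_hasOrthogonalProjection (K := α)).symm
  letI : MeasurableSpace (WithLp 2 ((↥αᗮ) × ↥α)) := borel _
  haveI : BorelSpace (WithLp 2 ((↥αᗮ) × ↥α)) := ⟨rfl⟩
  set n := finrank ℝ ↥αᗮ with hn
  set m := finrank ℝ ↥α with hm
  let b₁ := stdOrthonormalBasis ℝ ↥αᗮ
  let b₂ := stdOrthonormalBasis ℝ ↥α
  let e : ((↥αᗮ) × ↥α) ≃ₗ[ℝ] Ed d := Submodule.prodEquivOfIsCompl _ _ hc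
  let L : WithLp 2 ((↥αᗮ) × ↥α) ≃ₗᵢ[ℝ] Ed d :=
    LinearEquiv.isometryOfInner (𝕜 := ℝ) (E := WithLp 2 ((↥αᗮ) × ↥α)) (E' := Ed d)
      ((WithLp.linearEquiv 2 ℝ ((↥αᗮ) × ↥α)).trans e) (by
      intro (x : WithLp 2 ((↥αᗮ) × ↥α)) (y : WithLp 2 ((↥αᗮ) × ↥α))
      rcases x with ⟨x⟩
      rcases y with ⟨y⟩
      show (inner ℝ ((x.1 : Ed d) + (x.2 : Ed d)) ((y.1 : Ed d) + (y.2 : Ed d)) : ℝ)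
        = inner ℝ x.1 y.1 + inner ℝ x.2 y.2
      have h1 : (inner ℝ ((x.1 : Ed d)) ((y.2 : Ed d)) : ℝ) = 0 := by
        rw [real_inner_comm]
        exact Submodule.inner_right_of_mem_orthogonal y.2.2 x.1.2
      have h2 : (inner ℝ ((x.2 : Ed d)) ((y.1 : Ed d)) : ℝ) = 0 :=
        Submodule.inner_right_of_mem_orthogonal x.2.2 y.1.2
      rw [inner_add_left, inner_add_right, inner_add_right, h1, h2]
      simp [Submodule.coe_inner])
  let b : OrthonormalBasis (Fin n ⊕ Fin m) ℝ (WithLp 2 ((↥αᗮ) × ↥α)) := b₁.prod b₂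
  have key : ∀ u : EuclideanSpace ℝ (Fin n ⊕ Fin m),
      L (b.repr.symm u)
        = ((b₁.repr.symm (WithLp.toLp 2 fun i => u (Sum.inl i)) : ↥αᗮ) : Ed d)
          + ((b₂.repr.symm (WithLp.toLp 2 fun j => u (Sum.inr j)) : ↥α) : Ed d) := by
    intro u
    have hb : b.repr.symm u
        = (WithLp.equiv 2 _).symm
            (b₁.repr.symm (WithLp.toLp 2 fun i => u (Sum.inl i)), b₂.repr.symm (WithLp.toLp 2 fun j => u (Sum.inr j))) := by
      apply b.repr.injective
      rw [LinearIsometryEquiv.apply_symm_apply]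
      ext i
      rw [OrthonormalBasis.repr_apply_apply]
      cases i with
      | inl i =>
          have hbi : b (Sum.inl i) = (WithLp.equiv 2 _).symm (b₁ i, 0) := by
            simp only [b, OrthonormalBasis.prod_apply, Sum.elim_inl, Sum.elim_inr]; rfl
          rw [hbi, WithLp.prod_inner_apply]
          simp [← OrthonormalBasis.repr_apply_apply]
      | inr j =>
          have hbi : b (Sum.inr j) = (WithLp.equiv 2 _).symm (0, b₂ j) := by
            simp only [b, OrthonormalBasis.prod_apply, Sum.elim_inl, Sum.elim_inr]; rfl
          rw [hbi, WithLp.prod_inner_apply]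
          simp [← OrthonormalBasis.repr_apply_apply]
    rw [hb]
    rfl
  have hQ : MeasurePreserving
      (fun u : EuclideanSpace ℝ (Fin n ⊕ Fin m) =>
        ((b₁.repr.symm (WithLp.toLp 2 fun i => u (Sum.inl i)), b₂.repr.symm (WithLp.toLp 2 fun j => u (Sum.inr j))) : (↥αᗮ) × ↥α))
      volume (volume.prod volume) := by
    have h1 := EuclideanSpace.volume_preserving_symm_measurableEquiv_toLp (Fin n ⊕ Fin m)
    have h2 := volume_measurePreserving_sumPiEquivProdPi (fun _ : Fin n ⊕ Fin m => ℝ)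
    have h3 := (PiLp.volume_preserving_toLp (Fin n)).prod
      (PiLp.volume_preserving_toLp (Fin m))
    have h4 := (b₁.measurePreserving_repr_symm).prod (b₂.measurePreserving_repr_symm)
    exact ((h4.comp h3).comp h2).comp h1
  have hT : Measurable (fun p : (↥αᗮ) × ↥α => ((p.1 : Ed d) + (p.2 : Ed d))) :=
    ((continuous_subtype_val.comp continuous_fst).add
      (continuous_subtype_val.comp continuous_snd)).measurable
  refine ⟨hT, ?_⟩
  rw [← hQ.map_eq, Measure.map_map hT hQ.measurable]
  have hfe : ((fun p : (↥αᗮ) × ↥α => ((p.1 : Ed d) + (p.2 : Ed d))) ∘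
      (fun u : EuclideanSpace ℝ (Fin n ⊕ Fin m) =>
        ((b₁.repr.symm (WithLp.toLp 2 fun i => u (Sum.inl i)), b₂.repr.symm (WithLp.toLp 2 fun j => u (Sum.inr j))) : (↥αᗮ) × ↥α)))
      = (⇑L ∘ ⇑b.repr.symm) := funext fun u => (key u).symm
  rw [hfe, ← Measure.map_map L.measurePreserving.measurable b.measurePreserving_repr_symm.measurable,
    b.measurePreserving_repr_symm.map_eq, L.measurePreserving.map_eq]

set_option maxHeartbeats 1600000 in
/-- Fourier slice theorem for the `k`-plane transform. -/
theorem fourier_slice (d k : ℕ) (hd : 2 ≤ d) (hk1 : 1 ≤ k) (hk2 : k ≤ d - 1)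
    (f : SchwartzMap (Ed d) ℂ) (α : Submodule ℝ (Ed d))
    (hα : Module.finrank ℝ α = k) (η : αᗮ) :
    uFT (fun y : αᗮ => kplane (⇑f) α (y : Ed d)) η
      = (((2 * Real.pi) ^ ((k : ℝ) / 2) : ℝ) : ℂ) * uFT (⇑f) ((η : Ed d)) := by
  classical
  have hπ : (0:ℝ) < 2 * Real.pi := by positivity
  have hdim : (k : ℝ) + (Module.finrank ℝ ↥αᗮ : ℝ) = d := by
    have h := Submodule.finrank_add_finrank_orthogonal (K := α)
    rw [hα, finrank_euclideanSpace_fin] at h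
    exact_mod_cast congrArg (Nat.cast : ℕ → ℝ) h
  set g : Ed d → ℂ :=
    fun z => Complex.exp (-(Complex.I * ((inner ℝ z ((η : Ed d)) : ℝ) : ℂ))) * f z with hg
  have hinner_cont : Continuous fun z : Ed d => (inner ℝ z ((η : Ed d)) : ℝ) :=
    continuous_id.inner continuous_const
  have hchar : Continuous fun z : Ed d =>
      Complex.exp (-(Complex.I * ((inner ℝ z ((η : Ed d)) : ℝ) : ℂ))) :=
    Complex.continuous_exp.comp
      ((continuous_const.mul (Complex.continuous_ofReal.comp hinner_cont)).neg)
  have hnorm : ∀ z : Ed d,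
      ‖Complex.exp (-(Complex.I * ((inner ℝ z ((η : Ed d)) : ℝ) : ℂ)))‖ = 1 := by
    intro z
    rw [Complex.norm_exp]
    simp [Complex.mul_re]
  have hg_int : Integrable g := by
    exact (f.integrable (μ := volume)).bdd_mul hchar.aestronglyMeasurable
      (Filter.Eventually.of_forall fun z => le_of_eq (hnorm z))
  have hmp := mp_orthoSum α
  have hg_meas : AEStronglyMeasurable g
      (Measure.map (fun p : ↥αᗮ × ↥α => ((p.1 : Ed d) + (p.2 : Ed d))) (volume.prod volume)) := by
    rw [hmp.map_eq]; exact hg_int.aestronglyMeasurable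
  have hcomp_int : Integrable (fun p : ↥αᗮ × ↥α => g ((p.1 : Ed d) + (p.2 : Ed d)))
      (volume.prod volume) :=
    (integrable_map_measure hg_meas hmp.measurable.aemeasurable).mp (by rw [hmp.map_eq]; exact hg_int)
  have hstep : ∀ y : αᗮ,
      Complex.exp (-(Complex.I * ((inner ℝ y η : ℝ) : ℂ))) * (∫ x : α, f ((x : Ed d) + (y : Ed d)))
        = ∫ x : α, g ((x : Ed d) + (y : Ed d)) := by
    intro y
    rw [← integral_const_mul]
    refine integral_congr_ae (Filter.Eventually.of_forall fun x => ?_)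
    have hx : (inner ℝ ((x : Ed d)) ((η : Ed d)) : ℝ) = 0 :=
      Submodule.inner_right_of_mem_orthogonal x.2 η.2
    have hin : (inner ℝ ((x : Ed d) + (y : Ed d)) ((η : Ed d)) : ℝ) = (inner ℝ y η : ℝ) := by
      rw [inner_add_left, hx, zero_add, Submodule.coe_inner]
    simp only [hg, hin]
  have hFub : (∫ y : ↥αᗮ, ∫ x : ↥α, g ((x : Ed d) + (y : Ed d))) = ∫ z : Ed d, g z := by
    have hunc : Integrable
        (Function.uncurry fun (y : ↥αᗮ) (x : ↥α) => g ((x : Ed d) + (y : Ed d)))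
        (volume.prod volume) := by
      have heq : (Function.uncurry fun (y : ↥αᗮ) (x : ↥α) => g ((x : Ed d) + (y : Ed d)))
          = fun p : ↥αᗮ × ↥α => g ((p.1 : Ed d) + (p.2 : Ed d)) := by
        funext p
        simp only [Function.uncurry]
        rw [add_comm]
      rw [heq]; exact hcomp_int
    rw [MeasureTheory.integral_integral hunc]
    have h1 : (∫ z : ↥αᗮ × ↥α, g ((z.2 : Ed d) + (z.1 : Ed d)) ∂(volume.prod volume))
        = ∫ z : ↥αᗮ × ↥α, g ((z.1 : Ed d) + (z.2 : Ed d)) ∂(volume.prod volume) :=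
      integral_congr_ae (Filter.Eventually.of_forall fun p => by show g ((p.2 : Ed d) + (p.1 : Ed d)) = g ((p.1 : Ed d) + (p.2 : Ed d)); rw [add_comm])
    rw [h1, ← hmp.map_eq, integral_map hmp.measurable.aemeasurable hg_meas]
  unfold uFT kplane
  simp_rw [hstep]
  rw [hFub]
  have hRHS : (∫ v : Ed d,
      Complex.exp (-(Complex.I * ((inner ℝ v ((η : Ed d)) : ℝ) : ℂ))) * f v) = ∫ z : Ed d, g z := rfl
  rw [hRHS, finrank_euclideanSpace_fin, ← mul_assoc, ← Complex.ofReal_mul]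
  congr 2
  rw [← Real.rpow_add hπ]
  congr 1
  linarith
end
end

section
/- Let d ≥ 2 and 1 ≤ k ≤ d−1 be integers, and let φ : EuclideanSpace ℝ d → ℂ be a smooth function all of whose derivatives are bounded, so that for Schwartz f the Fourier multiplier Mf := (φ·f̂)^∨ (inverse unitary Fourier transform of φ·f̂) is again a Schwartz function. Then for every Schwartz function f : EuclideanSpace ℝ d → ℂ, every k-dimensional linear subspace α of EuclideanSpace ℝ d, and every η ∈ αᗮ, one has \widehat{P(Mf)}(α,η) = φ(η) · \widehat{Pf}(α,η), where on the right-hand side η is regarded as an element of EuclideanSpace ℝ d via the inclusion αᗮ ↪ EuclideanSpace ℝ d. In other words, the k-plane transform intertwines the Euclidean Fourier multiplier M with the corresponding fiberwise multiplier on the affine Grassmannian. -/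
open MeasureTheory ENNReal

noncomputable section

open FourierTransform Real

set_option maxHeartbeats 1000000

section helpers

variable {V : Type*} [NormedAddCommGroup V] [InnerProductSpace ℝ V]
    [FiniteDimensional ℝ V] [MeasurableSpace V] [BorelSpace V]

lemma uFT_eq_fourier (h : V → ℂ) (ξ : V) :
    uFT h ξ = (((2 * Real.pi) ^ (-(Module.finrank ℝ V : ℝ) / 2) : ℝ) : ℂ) *
      𝓕 h ((2 * Real.pi)⁻¹ • ξ) := by
  have hgen : ∀ t : ℝ, ((-2 * Real.pi * ((2 * Real.pi)⁻¹ * t) : ℝ) : ℂ) * Complex.I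
      = -(Complex.I * (t : ℂ)) := by
    intro t
    have h1 : -2 * Real.pi * ((2 * Real.pi)⁻¹ * t) = -t := by field_simp
    rw [h1]
    push_cast
    ring
  rw [uFT, Real.fourier_eq']
  simp_rw [smul_eq_mul, real_inner_smul_right, hgen]

lemma uFTinv_eq_fourier (h : V → ℂ) (x : V) :
    uFTinv h x = (((2 * Real.pi) ^ ((Module.finrank ℝ V : ℝ) / 2) : ℝ) : ℂ) *
      𝓕⁻ (fun u => h ((2 * Real.pi) • u)) x := by
  have key := Measure.integral_comp_smul volume
    (fun v => Complex.exp (Complex.I * ((inner ℝ v x : ℝ) : ℂ)) * h v) (2 * Real.pi)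
  have hcomm : ∀ t : ℝ, ((t : ℝ) : ℂ) * Complex.I = Complex.I * (t : ℂ) := fun t => mul_comm _ _
  have main : (𝓕⁻ (fun u => h ((2 * Real.pi) • u)) x)
      = |((2 * Real.pi) ^ Module.finrank ℝ V)⁻¹| •
        ∫ v : V, Complex.exp (Complex.I * ((inner ℝ v x : ℝ) : ℂ)) * h v := by
    rw [Real.fourierInv_eq', ← key]
    simp_rw [smul_eq_mul, real_inner_smul_left, hcomm]
  rw [uFTinv, main, Complex.real_smul, ← mul_assoc]
  congr 1
  have habs : |((2 * Real.pi) ^ Module.finrank ℝ V)⁻¹|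
      = ((2 * Real.pi) ^ Module.finrank ℝ V)⁻¹ := by
    rw [abs_of_pos]; positivity
  rw [habs, ← Complex.ofReal_mul]
  congr 1
  rw [← Real.rpow_natCast (2 * Real.pi) (Module.finrank ℝ V), ← Real.rpow_neg (by positivity),
    ← Real.rpow_add (by positivity)]
  congr 1
  ring

lemma multiplier_repr {d : ℕ} (φ : Ed d → ℂ) (hφ : ContDiff ℝ (⊤ : ℕ∞) φ)
    (hφbd : ∀ n : ℕ, ∃ C : ℝ, ∀ x : Ed d, ‖iteratedFDeriv ℝ n φ x‖ ≤ C)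
    (f : SchwartzMap (Ed d) ℂ) :
    ∃ g : SchwartzMap (Ed d) ℂ,
      uFTinv (fun ξ => φ ξ * uFT (⇑f) ξ) = ⇑g ∧
      ∀ ξ, uFT (⇑g) ξ = φ ξ * uFT (⇑f) ξ := by
  have h2π : (0 : ℝ) < 2 * Real.pi := by positivity
  set L : Ed d →L[ℝ] Ed d := (2 * Real.pi) • (ContinuousLinearMap.id ℝ (Ed d)) with hLdef
  have hLapp : ∀ u : Ed d, L u = (2 * Real.pi) • u := fun u => rfl
  have hφ2 : Function.HasTemperateGrowth fun u : Ed d => φ ((2 * Real.pi) • u) := by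
    constructor
    · exact ((hφ.comp (contDiff_id.const_smul (2 * Real.pi))).of_le (by simp))
    · intro n
      obtain ⟨C, hC⟩ := hφbd n
      refine ⟨0, (max C 0) * ‖L‖ ^ n, fun x => ?_⟩
      have h1 : iteratedFDeriv ℝ n (fun u : Ed d => φ ((2 * Real.pi) • u)) x
          = (iteratedFDeriv ℝ n φ (L x)).compContinuousLinearMap fun _ => L := by
        have := L.iteratedFDeriv_comp_right (f := φ) hφ (x := x) (i := n) (by exact_mod_cast le_top)
        simpa [Function.comp_def, hLapp] using this
      rw [h1]
      simp only [pow_zero, mul_one]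
      calc ‖(iteratedFDeriv ℝ n φ (L x)).compContinuousLinearMap fun _ => L‖
          ≤ ‖iteratedFDeriv ℝ n φ (L x)‖ * ∏ _i : Fin n, ‖L‖ :=
            ContinuousMultilinearMap.norm_compContinuousLinearMap_le _ _
        _ ≤ (max C 0) * ‖L‖ ^ n := by
            rw [Finset.prod_const, Finset.card_univ, Fintype.card_fin]
            exact mul_le_mul ((hC _).trans (le_max_left _ _)) le_rfl
              (by positivity) (le_max_right _ _)
  let Fs : SchwartzMap (Ed d) ℂ := SchwartzMap.fourierTransformCLM ℝ f
  let Hs : SchwartzMap (Ed d) ℂ :=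
    SchwartzMap.bilinLeftCLM (ContinuousLinearMap.mul ℝ ℂ) hφ2 Fs
  have hHs : ∀ u : Ed d, Hs u = 𝓕 (⇑f) u * φ ((2 * Real.pi) • u) := fun u => rfl
  set g : SchwartzMap (Ed d) ℂ := (FourierTransform.fourierCLE ℝ (SchwartzMap (Ed d) ℂ)).symm Hs with hgdef
  have hg1 : ⇑g = 𝓕⁻ ⇑Hs := by
    rw [hgdef, FourierTransform.fourierCLE_symm_apply, SchwartzMap.fourierInv_coe]
  have hg2 : 𝓕 ⇑g = ⇑Hs := by
    rw [← SchwartzMap.fourier_coe]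
    exact congrArg _ ((FourierTransform.fourierCLE ℝ (SchwartzMap (Ed d) ℂ)).apply_symm_apply Hs)
  set c : ℝ := (2 * Real.pi) ^ (-(Module.finrank ℝ (Ed d) : ℝ) / 2) with hcdef
  have hcancel : ∀ ξ : Ed d, (2 * Real.pi)⁻¹ • (2 * Real.pi) • ξ = ξ := by
    intro ξ
    rw [smul_smul, inv_mul_cancel₀ (ne_of_gt h2π), one_smul]
  have hcancel2 : ∀ ξ : Ed d, (2 * Real.pi) • (2 * Real.pi)⁻¹ • ξ = ξ := by
    intro ξ
    rw [smul_smul, mul_inv_cancel₀ (ne_of_gt h2π), one_smul]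
  refine ⟨g, ?_, ?_⟩
  · funext x
    rw [hg1, uFTinv_eq_fourier]
    have hfun : (fun u : Ed d => (fun ξ => φ ξ * uFT (⇑f) ξ) ((2 * Real.pi) • u))
        = fun u => (c : ℂ) • Hs u := by
      funext u
      simp only [uFT_eq_fourier, hHs, hcancel, smul_eq_mul, ← hcdef]
      ring
    rw [hfun]
    have hsm : 𝓕⁻ (fun u : Ed d => (c : ℂ) • Hs u) x = (c : ℂ) • 𝓕⁻ (⇑Hs) x := by
      have := VectorFourier.fourierIntegral_const_smul (𝐞) (volume : Measure (Ed d))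
        (-innerₗ (Ed d)) (⇑Hs) (c : ℂ)
      exact congrFun this x
    rw [hsm, smul_eq_mul, ← mul_assoc, ← Complex.ofReal_mul,
      ← Real.rpow_add h2π,
      show ((Module.finrank ℝ (Ed d) : ℝ)) / 2 + -(Module.finrank ℝ (Ed d) : ℝ) / 2 = 0 by ring,
      Real.rpow_zero, Complex.ofReal_one, one_mul]
  · intro ξ
    rw [uFT_eq_fourier, hg2, hHs, hcancel2, uFT_eq_fourier (⇑f) ξ, ← hcdef]
    ring

end helpers

lemma integral_split {d : ℕ} (α : Submodule ℝ (Ed d)) (F : Ed d → ℂ) (hF : Integrable F) :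
    ∫ z, F z = ∫ y : αᗮ, ∫ x : α, F ((x : Ed d) + (y : Ed d)) := by
  classical
  set k := Module.finrank ℝ α with hk
  set m := Module.finrank ℝ αᗮ with hm
  let b := stdOrthonormalBasis ℝ α
  let c := stdOrthonormalBasis ℝ αᗮ
  let v : Fin k ⊕ Fin m → Ed d := Sum.elim (fun i => (b i : Ed d)) (fun j => (c j : Ed d))
  have hon : Orthonormal ℝ v := by
    constructor
    · rintro (i | j)
      · exact b.orthonormal.1 i
      · exact c.orthonormal.1 j
    · rintro (i | j) (i' | j') hne
      · have hii : i ≠ i' := fun h => hne (by rw [h])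
        exact b.orthonormal.2 hii
      · exact (Submodule.mem_orthogonal α ((c j') : Ed d)).1 (c j').2 _ (b i).2
      · rw [real_inner_comm]
        exact (Submodule.mem_orthogonal α ((c j) : Ed d)).1 (c j).2 _ (b i').2
      · have hjj : j ≠ j' := fun h => hne (by rw [h])
        exact c.orthonormal.2 hjj
  have hsp : ⊤ ≤ Submodule.span ℝ (Set.range v) := by
    have hsplit : Set.range v
        = Set.range (fun i => ((b i : Ed d))) ∪ Set.range (fun j => ((c j : Ed d))) :=
      Set.Sum.elim_range _ _
    have hbspan : Submodule.span ℝ (Set.range (fun i => ((b i : Ed d)))) = α := by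
      have h1 : Set.range (fun i => ((b i : Ed d))) = α.subtype '' Set.range b := by
        rw [← Set.range_comp]; rfl
      rw [h1, ← Submodule.map_span]
      have h2 : Submodule.span ℝ (Set.range ⇑b) = ⊤ := by
        rw [← b.coe_toBasis]; exact b.toBasis.span_eq
      rw [h2, Submodule.map_subtype_top]
    have hcspan : Submodule.span ℝ (Set.range (fun j => ((c j : Ed d)))) = αᗮ := by
      have h1 : Set.range (fun j => ((c j : Ed d))) = αᗮ.subtype '' Set.range c := by
        rw [← Set.range_comp]; rfl
      rw [h1, ← Submodule.map_span]
      have h2 : Submodule.span ℝ (Set.range ⇑c) = ⊤ := by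
        rw [← c.coe_toBasis]; exact c.toBasis.span_eq
      rw [h2, Submodule.map_subtype_top]
    rw [hsplit, Submodule.span_union, hbspan, hcspan,
      Submodule.sup_orthogonal_of_hasOrthogonalProjection]
  let B : OrthonormalBasis (Fin k ⊕ Fin m) ℝ (Ed d) := OrthonormalBasis.mk hon hsp
  let T : (α × αᗮ) ≃ᵐ Ed d :=
    (b.measurableEquiv.prodCongr c.measurableEquiv).trans
      ((((MeasurableEquiv.toLp 2 (Fin k → ℝ)).symm).prodCongr
          ((MeasurableEquiv.toLp 2 (Fin m → ℝ)).symm)).trans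
        (((MeasurableEquiv.sumPiEquivProdPi (fun _ : Fin k ⊕ Fin m => ℝ)).symm).trans
          ((MeasurableEquiv.toLp 2 (Fin k ⊕ Fin m → ℝ)).symm.symm.trans
            B.measurableEquiv.symm)))
  have hT : MeasurePreserving T volume volume := by
    have h1 : MeasurePreserving (⇑(b.measurableEquiv.prodCongr c.measurableEquiv))
        volume volume := by
      rw [Measure.volume_eq_prod (α := α) (β := αᗮ),
        Measure.volume_eq_prod]
      exact (b.measurePreserving_measurableEquiv).prod (c.measurePreserving_measurableEquiv)
    have h2 : MeasurePreserving (⇑(((MeasurableEquiv.toLp 2 (Fin k → ℝ)).symm).prodCongr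
        ((MeasurableEquiv.toLp 2 (Fin m → ℝ)).symm))) volume volume := by
      rw [Measure.volume_eq_prod, Measure.volume_eq_prod]
      exact (EuclideanSpace.volume_preserving_symm_measurableEquiv_toLp (Fin k)).prod
        (EuclideanSpace.volume_preserving_symm_measurableEquiv_toLp (Fin m))
    have h3 : MeasurePreserving
        (⇑(MeasurableEquiv.sumPiEquivProdPi (fun _ : Fin k ⊕ Fin m => ℝ)).symm)
        volume volume := by
      rw [Measure.volume_eq_prod]
      exact volume_measurePreserving_sumPiEquivProdPi_symm _
    have h4 : MeasurePreserving (⇑(MeasurableEquiv.toLp 2 (Fin k ⊕ Fin m → ℝ)).symm.symm)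
        volume volume := (EuclideanSpace.volume_preserving_symm_measurableEquiv_toLp _).symm
    have h5 : MeasurePreserving (⇑B.measurableEquiv.symm) volume volume :=
      B.measurePreserving_measurableEquiv.symm
    have : ⇑T = ⇑B.measurableEquiv.symm ∘ ⇑(MeasurableEquiv.toLp 2 (Fin k ⊕ Fin m → ℝ)).symm.symm
        ∘ ⇑(MeasurableEquiv.sumPiEquivProdPi (fun _ : Fin k ⊕ Fin m => ℝ)).symm
        ∘ ⇑(((MeasurableEquiv.toLp 2 (Fin k → ℝ)).symm).prodCongr
            ((MeasurableEquiv.toLp 2 (Fin m → ℝ)).symm))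
        ∘ ⇑(b.measurableEquiv.prodCongr c.measurableEquiv) := by
      funext p
      simp only [T, MeasurableEquiv.trans_apply, Function.comp_apply]
    rw [this]
    exact h5.comp (h4.comp (h3.comp (h2.comp h1)))
  have hTval : ∀ (x : α) (y : αᗮ), T (x, y) = (x : Ed d) + (y : Ed d) := by
    intro x y
    have hTxy : T (x, y) = B.repr.symm
        (WithLp.toLp 2 ((MeasurableEquiv.sumPiEquivProdPi (fun _ : Fin k ⊕ Fin m => ℝ)).symm
          ((b.repr x).ofLp, (c.repr y).ofLp))) := rfl
    rw [hTxy, ← B.sum_repr_symm]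
    rw [Fintype.sum_sum_type]
    have hBl : ∀ i : Fin k, B (Sum.inl i) = (b i : Ed d) := fun i => by
      simp [B, OrthonormalBasis.coe_mk, v]
    have hBr : ∀ j : Fin m, B (Sum.inr j) = (c j : Ed d) := fun j => by
      simp [B, OrthonormalBasis.coe_mk, v]
    have huL : ∀ i : Fin k,
        ((MeasurableEquiv.sumPiEquivProdPi (fun _ : Fin k ⊕ Fin m => ℝ)).symm
          ((b.repr x).ofLp, (c.repr y).ofLp) : Fin k ⊕ Fin m → ℝ) (Sum.inl i)
        = b.repr x i := fun i => rfl
    have huR : ∀ j : Fin m,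
        ((MeasurableEquiv.sumPiEquivProdPi (fun _ : Fin k ⊕ Fin m => ℝ)).symm
          ((b.repr x).ofLp, (c.repr y).ofLp) : Fin k ⊕ Fin m → ℝ) (Sum.inr j)
        = c.repr y j := fun j => rfl
    simp only [huL, huR, hBl, hBr]
    have h1 : (∑ i : Fin k, b.repr x i • ((b i : Ed d))) = (x : Ed d) := by
      conv_rhs => rw [← b.sum_repr x]
      push_cast
      rfl
    have h2 : (∑ j : Fin m, c.repr y j • ((c j : Ed d))) = (y : Ed d) := by
      conv_rhs => rw [← c.sum_repr y]
      push_cast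
      rfl
    rw [h1, h2]
  have hFT : Integrable (fun p : α × αᗮ => F (T p)) volume :=
    (hT.integrable_comp_emb T.measurableEmbedding).2 hF
  calc ∫ z, F z = ∫ p : α × αᗮ, F (T p) := (hT.integral_comp T.measurableEmbedding F).symm
    _ = ∫ y : αᗮ, ∫ x : α, F (T (x, y)) := by
        rw [Measure.volume_eq_prod] at hFT ⊢
        exact integral_prod_symm _ hFT
    _ = ∫ y : αᗮ, ∫ x : α, F ((x : Ed d) + (y : Ed d)) := by
        simp_rw [hTval]


lemma kplane_uFT {d : ℕ} (g : Ed d → ℂ) (hg : Integrable g) (α : Submodule ℝ (Ed d)) (η : αᗮ) :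
    uFT (fun y : αᗮ => kplane g α (y : Ed d)) η
      = (((2 * Real.pi) ^ ((Module.finrank ℝ α : ℝ) / 2) : ℝ) : ℂ) * uFT g (η : Ed d) := by
  have h2π : (0 : ℝ) < 2 * Real.pi := by positivity
  set E : Ed d → ℂ :=
    fun z => Complex.exp (-(Complex.I * ((inner ℝ z ((η : Ed d)) : ℝ) : ℂ))) * g z with hE
  have hEcont : Continuous fun z : Ed d =>
      Complex.exp (-(Complex.I * ((inner ℝ z ((η : Ed d)) : ℝ) : ℂ))) := by
    have hinn : Continuous fun z : Ed d => (inner ℝ z ((η : Ed d)) : ℝ) :=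
      continuous_id.inner continuous_const
    exact Complex.continuous_exp.comp
      ((continuous_const.mul (Complex.continuous_ofReal.comp hinn)).neg)
  have hintE : Integrable E := by
    refine hg.bdd_mul hEcont.aestronglyMeasurable (c := 1) (Filter.Eventually.of_forall fun z => ?_)
    rw [Complex.norm_exp]
    simp
  have hsplit := integral_split α E hintE
  have hinner : ∀ (x : α) (y : αᗮ),
      ((inner ℝ ((x : Ed d) + (y : Ed d)) ((η : Ed d)) : ℝ)) = (inner ℝ y η : ℝ) := by
    intro x y
    rw [inner_add_left, (Submodule.mem_orthogonal α ((η : Ed d))).1 η.2 _ x.2, zero_add]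
    rfl
  have hinnerfun : ∀ y : αᗮ,
      (Complex.exp (-(Complex.I * ((inner ℝ y η : ℝ) : ℂ))) * kplane g α (y : Ed d))
        = ∫ x : α, E ((x : Ed d) + (y : Ed d)) := by
    intro y
    rw [kplane, ← integral_const_mul]
    simp_rw [hE, hinner]
  rw [uFT, uFT]
  simp_rw [hinnerfun]
  rw [← hE, ← hsplit, ← mul_assoc]
  congr 1
  rw [← Complex.ofReal_mul]
  congr 1
  rw [← Real.rpow_add h2π]
  congr 1
  have hdim : Module.finrank ℝ α + Module.finrank ℝ αᗮ
      = Module.finrank ℝ (Ed d) := Submodule.finrank_add_finrank_orthogonal α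
  rw [← hdim]
  push_cast
  ring

/-- The `k`-plane transform intertwines Euclidean Fourier multipliers with the
corresponding fiberwise multipliers on the affine Grassmannian. -/
theorem kplane_intertwines_multiplier (d k : ℕ) (hd : 2 ≤ d) (hk1 : 1 ≤ k) (hk2 : k ≤ d - 1)
    (φ : Ed d → ℂ) (hφ : ContDiff ℝ (⊤ : ℕ∞) φ)
    (hφbd : ∀ n : ℕ, ∃ C : ℝ, ∀ x : Ed d, ‖iteratedFDeriv ℝ n φ x‖ ≤ C)
    (f : SchwartzMap (Ed d) ℂ) (α : Submodule ℝ (Ed d))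
    (hα : Module.finrank ℝ α = k) (η : αᗮ) :
    uFT (fun y : αᗮ => kplane (uFTinv (fun ξ => φ ξ * uFT (⇑f) ξ)) α (y : Ed d)) η
      = φ (η : Ed d) * uFT (fun y : αᗮ => kplane (⇑f) α (y : Ed d)) η := by
  obtain ⟨g, hg_eq, hg_uFT⟩ := multiplier_repr φ hφ hφbd f
  rw [hg_eq, kplane_uFT (⇑g) g.integrable α η, kplane_uFT (⇑f) f.integrable α η, hg_uFT]
  ring
end
end
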